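/- arXiv:math/0512511 — 4 statements merged into one kernel-verified Lean document; each statement's English description precedes it below -/
import Mathlib

section
/- Let v, ξ ∈ ℂ and let f : ℂ × ℝ × ℝ → ℂ be a smooth map (of real variables) such that f(p, φ, 0) = e^{iφ} v for all p, φ, and such that for every α ∈ ℝ, f(e^{iθ}(p − ξ) + ξ, φ + θ, α) = e^{iθ} f(p, φ, α) for all p ∈ ℂ and φ, θ ∈ ℝ. Then there exists a smooth map H : ℂ × ℝ → ℂ such that f(p, φ, α) = e^{iφ}[ v + α H((p − ξ)e^{−iφ}, α) ] for all p ∈ ℂ, φ ∈ ℝ, α ∈ ℝ. -/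
open Set Filter Metric Finset

noncomputable section HadamardAux

/-- The vector `(0, 1)`. -/
def hadE : ℂ × ℝ := ((0 : ℂ), (1 : ℝ))

end HadamardAux

section HadamardSmooth

open MeasureTheory intervalIntegral
open scoped Interval

lemma paramInt_contDiff_nat {E : Type} [NormedAddCommGroup E] [NormedSpace ℝ E]
    [FiniteDimensional ℝ E] (n : ℕ) :
    ∀ {G : Type} [NormedAddCommGroup G] [NormedSpace ℝ G] (F : E × ℝ → G),
      ContDiff ℝ (⊤ : ℕ∞) F → ContDiff ℝ n (fun x => ∫ t in (0:ℝ)..1, F (x, t)) := by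
  induction n with
  | zero =>
    intro G _ _ F hF
    rw [Nat.cast_zero, contDiff_zero]
    exact intervalIntegral.continuous_parametric_intervalIntegral_of_continuous'
      (f := fun x t => F (x, t)) hF.continuous 0 1
  | succ n ih =>
    intro G _ _ F hF
    have hFd : ContDiff ℝ (⊤ : ℕ∞) (fderiv ℝ F) := (contDiff_infty_iff_fderiv.mp hF).2
    set F' : E × ℝ → (E →L[ℝ] G) := fun z => (fderiv ℝ F z).comp (ContinuousLinearMap.inl ℝ E ℝ)
      with hF'def
    have hF' : ContDiff ℝ (⊤ : ℕ∞) F' := hFd.clm_comp contDiff_const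
    have hdiff : Differentiable ℝ F := hF.differentiable (by simp)
    have hd : ∀ x₀ : E, HasFDerivAt (fun x => ∫ t in (0:ℝ)..1, F (x, t))
        (∫ t in (0:ℝ)..1, F' (x₀, t)) x₀ := by
      intro x₀
      obtain ⟨C, hC⟩ := ((isCompact_closedBall x₀ 1).prod (isCompact_Icc (a := (0:ℝ)) (b := 1))).exists_bound_of_continuousOn
        (f := F') hF'.continuous.continuousOn
      refine intervalIntegral.hasFDerivAt_integral_of_dominated_of_fderiv_le (𝕜 := ℝ)
        (μ := volume) (F := fun x t => F (x, t)) (F' := fun x t => F' (x, t))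
        (s := Metric.ball x₀ 1) (bound := fun _ => C) (Metric.ball_mem_nhds x₀ one_pos)
        (Filter.Eventually.of_forall fun x =>
          (hF.continuous.comp (continuous_const.prodMk continuous_id)).aestronglyMeasurable)
        ((hF.continuous.comp (continuous_const.prodMk continuous_id)).intervalIntegrable 0 1)
        ((hF'.continuous.comp (continuous_const.prodMk continuous_id)).aestronglyMeasurable)
        (Filter.Eventually.of_forall fun t ht x hx => ?_) intervalIntegrable_const
        (Filter.Eventually.of_forall fun t _ x _ => ?_)
      · rw [Set.uIoc_of_le zero_le_one] at ht
        exact hC (x, t) ⟨Metric.ball_subset_closedBall hx, Set.Ioc_subset_Icc_self ht⟩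
      · exact (hdiff (x, t)).hasFDerivAt.comp x (hasFDerivAt_prodMk_left x t)
    have hfd : fderiv ℝ (fun x => ∫ t in (0:ℝ)..1, F (x, t))
        = fun x => ∫ t in (0:ℝ)..1, F' (x, t) := funext fun x => (hd x).fderiv
    rw [show ((n + 1 : ℕ) : WithTop ℕ∞) = (n : WithTop ℕ∞) + 1 by push_cast; rfl,
      contDiff_succ_iff_fderiv]
    refine ⟨fun x => (hd x).differentiableAt, fun h => absurd h (by simp), ?_⟩
    rw [hfd]
    exact ih F' hF'

theorem hadamard_division_smooth (g : ℂ × ℝ → ℂ) (hgc : ContDiff ℝ (⊤ : ℕ∞) g)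
    (h0 : ∀ q, g (q, 0) = 0) :
    ∃ H : ℂ × ℝ → ℂ, ContDiff ℝ (⊤ : ℕ∞) H ∧
      ∀ q α, g (q, α) = (α : ℂ) * H (q, α) := by
  have hgd : ContDiff ℝ (⊤ : ℕ∞) (fderiv ℝ g) := (contDiff_infty_iff_fderiv.mp hgc).2
  have hFc : ContDiff ℝ (⊤ : ℕ∞)
      (fun z : (ℂ × ℝ) × ℝ => fderiv ℝ g (z.1.1, z.2 * z.1.2) hadE) :=
    (hgd.comp (contDiff_fst.fst.prodMk (contDiff_snd.mul contDiff_fst.snd))).clm_apply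
      contDiff_const
  refine ⟨fun x => ∫ t in (0:ℝ)..1, fderiv ℝ g (x.1, t * x.2) hadE, ?_, ?_⟩
  · exact contDiff_infty.mpr fun n => paramInt_contDiff_nat n _ hFc
  · intro q α
    have hd : ∀ s : ℝ, HasDerivAt (fun s : ℝ => g (q, s)) (fderiv ℝ g (q, s) hadE) s := fun s =>
      ((hgc.differentiable (by simp)) (q, s)).hasFDerivAt.comp_hasDerivAt s
        (HasDerivAt.prodMk (hasDerivAt_const s q) (hasDerivAt_id s))
    have hc : Continuous (fun s : ℝ => fderiv ℝ g (q, s) hadE) :=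
      (hgd.continuous.comp (continuous_const.prodMk continuous_id)).clm_apply continuous_const
    have key := integral_unitInterval_deriv_eq_sub (f := fun s : ℝ => g (q, s))
      (f' := fun s => fderiv ℝ g (q, s) hadE) (z₀ := 0) (z₁ := α)
      (hc.comp (continuous_const.add (continuous_id.smul continuous_const))).continuousOn
      (fun t _ => hd _)
    simp only [zero_add, smul_eq_mul, h0 q, sub_zero] at key
    show g (q, α) = (α : ℂ) * ∫ t in (0:ℝ)..1, fderiv ℝ g (q, t * α) hadE
    rw [← key, Complex.real_smul]

end HadamardSmooth

/-- **Proposition 1 of the paper, one parameter axis.**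
If `f(p,φ,0) = e^{iφ} v` and, for every parameter value `α`, `f` is equivariant with
respect to rotations about `ξ`, then `f(p,φ,α) = e^{iφ}[v + α H((p-ξ)e^{-iφ}, α)]`
for some smooth `H : ℂ × ℝ → ℂ`. -/
theorem spiral_TSB_representation (v ξ : ℂ) (f : ℂ × ℝ × ℝ → ℂ)
    (hf : ContDiff ℝ (⊤ : ℕ∞) f)
    (h0 : ∀ (p : ℂ) (φ : ℝ), f (p, φ, 0) = Complex.exp ((φ : ℂ) * Complex.I) * v)
    (heq : ∀ (α : ℝ) (p : ℂ) (φ θ : ℝ),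
      f (Complex.exp ((θ : ℂ) * Complex.I) * (p - ξ) + ξ, φ + θ, α)
        = Complex.exp ((θ : ℂ) * Complex.I) * f (p, φ, α)) :
    ∃ H : ℂ × ℝ → ℂ, ContDiff ℝ (⊤ : ℕ∞) H ∧
      ∀ (p : ℂ) (φ α : ℝ),
        f (p, φ, α) = Complex.exp ((φ : ℂ) * Complex.I) *
          (v + (α : ℂ) * H ((p - ξ) * Complex.exp (-(φ : ℂ) * Complex.I), α)) := by
  set g : ℂ × ℝ → ℂ := fun x => f (x.1 + ξ, 0, x.2) - v with hgdef
  have hgc : ContDiff ℝ (⊤ : ℕ∞) g := by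
    refine ContDiff.sub ?_ contDiff_const
    exact hf.comp ((contDiff_fst.add contDiff_const).prodMk
      (contDiff_const.prodMk contDiff_snd))
  have hg0 : ∀ q : ℂ, g (q, 0) = 0 := by
    intro q
    have := h0 (q + ξ) 0
    simp only [hgdef]
    rw [this]
    simp
  obtain ⟨H, hH, hHeq⟩ := hadamard_division_smooth g hgc hg0
  refine ⟨H, ?_, ?_⟩
  · exact hH
  · intro p φ α
    have hee : Complex.exp ((φ : ℂ) * Complex.I) * Complex.exp (-(φ : ℂ) * Complex.I) = 1 := by
      rw [← Complex.exp_add]; ring_nf; exact Complex.exp_zero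
    have hrot := heq α ((p - ξ) * Complex.exp (-(φ : ℂ) * Complex.I) + ξ) 0 φ
    rw [zero_add] at hrot
    have hpt : Complex.exp ((φ : ℂ) * Complex.I) *
        ((p - ξ) * Complex.exp (-(φ : ℂ) * Complex.I) + ξ - ξ) + ξ = p := by
      rw [add_sub_cancel_right]
      calc Complex.exp ((φ : ℂ) * Complex.I) * ((p - ξ) * Complex.exp (-(φ : ℂ) * Complex.I)) + ξ
          = (p - ξ) * (Complex.exp ((φ : ℂ) * Complex.I) *
              Complex.exp (-(φ : ℂ) * Complex.I)) + ξ := by ring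
        _ = p := by rw [hee]; ring
    rw [hpt] at hrot
    have hval := hHeq ((p - ξ) * Complex.exp (-(φ : ℂ) * Complex.I)) α
    simp only [hgdef] at hval
    have hfval : f ((p - ξ) * Complex.exp (-(φ : ℂ) * Complex.I) + ξ, 0, α)
        = v + (α : ℂ) * H ((p - ξ) * Complex.exp (-(φ : ℂ) * Complex.I), α) := by
      linear_combination hval
    rw [hrot, hfval]
end

section
/- Let ξ ≠ 0 in ℝ², let F₀, G_ξ : ℝ² → ℝ² be real analytic with F₀(0) = 0 and G_ξ(ξ) = 0, and suppose DF₀(0) = [[a, −b], [b, a]] and DG_ξ(ξ) = [[c, −d], [d, c]] with a ≠ 0 and c ≠ 0. Define P(x, λ) = x + 2π[λ₁F₀(x) + λ₂G_ξ(x)]. Then there exist constants W > 0 and δ > 0 and a real analytic map x₀ defined on the wedge w₀ = { (λ₁, λ₂) : 0 < |λ₁| < δ, |λ₂| < W|λ₁| } such that for every λ ∈ w₀: (i) x₀(λ) is the unique fixed point of P(·, λ) in a fixed neighbourhood of 0; (ii) x₀(λ) → 0 as λ approaches the λ₁-axis away from the origin (i.e. as λ₂/λ₁ → 0 with λ₁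 bounded away from 0 within the wedge); and (iii) both eigenvalues of D_xP(x₀(λ), λ) lie strictly inside the unit circle if λ₁ a < 0 and strictly outside if λ₁ a > 0. The analogous statement holds for a wedge around the λ₂-axis, with fixed points near ξ and stability determined by sign(λ₂ c). -/
open Real Matrix

/-- The truncated two-inhomogeneity Poincaré map
`P(x, λ) = x + 2π[λ₁ F₀(x) + λ₂ G_ξ(x)]`. -/
noncomputable def Pmap (F G : (Fin 2 → ℝ) → Fin 2 → ℝ) (x : Fin 2 → ℝ) (l : ℝ × ℝ) :
    Fin 2 → ℝ :=
  x + (2 * π) • (l.1 • F x + l.2 • G x)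

/-- The (complex) eigenvalues of a real `2 × 2` matrix: its spectrum viewed over `ℂ`. -/
noncomputable def eigM (M : Matrix (Fin 2) (Fin 2) ℝ) : Set ℂ :=
  spectrum ℂ (M.map (algebraMap ℝ ℂ))

set_option maxHeartbeats 1000000

lemma quad_of_mem (N : Matrix (Fin 2) (Fin 2) ℝ) (s : ℝ) (hs : s ≠ 0) (μ : ℂ)
    (hμ : μ ∈ spectrum ℂ (((1 : Matrix (Fin 2) (Fin 2) ℝ) + s • N).map (algebraMap ℝ ℂ))) :
    ∃ ν : ℂ, μ = 1 + (s:ℂ) * ν ∧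
      ν^2 - ((N 0 0 + N 1 1 : ℝ) : ℂ) * ν + ((N 0 0 * N 1 1 - N 0 1 * N 1 0 : ℝ) : ℂ) = 0 := by
  rw [spectrum.mem_iff] at hμ
  have hdet : (algebraMap ℂ (Matrix (Fin 2) (Fin 2) ℂ) μ -
      ((1 : Matrix (Fin 2) (Fin 2) ℝ) + s • N).map (algebraMap ℝ ℂ)).det = 0 := by
    by_contra h
    exact hμ ((isUnit_iff_isUnit_det _).2 (isUnit_iff_ne_zero.2 h))
  rw [det_fin_two] at hdet
  simp only [Matrix.sub_apply, Matrix.map_apply, Matrix.add_apply, Matrix.one_apply,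
    Matrix.smul_apply, algebraMap_matrix_apply, smul_eq_mul, if_true, if_pos rfl] at hdet
  norm_num at hdet
  have hsC : (s : ℂ) ≠ 0 := by exact_mod_cast hs
  refine ⟨(μ - 1) / s, by field_simp; ring, ?_⟩
  field_simp
  push_cast at hdet ⊢
  ring_nf
  ring_nf at hdet
  linear_combination hdet


lemma nu_est (a b : ℝ) (ha : a ≠ 0) :
    ∃ ε > (0:ℝ), ∃ C > (0:ℝ), ∀ T D : ℝ, |T - 2*a| ≤ ε → |D - (a^2+b^2)| ≤ ε →
      ∀ ν : ℂ, ν^2 - (T:ℂ)*ν + (D:ℂ) = 0 →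
        Complex.normSq ν ≤ C ∧ |ν.re - a| ≤ |a|/4 := by
  have hA : 0 < |a| := abs_pos.2 ha
  refine ⟨min 1 (a^2/(64*(|a|+2))), by positivity, max 1 (((2*|a|+1) + (a^2+b^2+1))^2), by positivity,
    fun T D hT hD ν hν => ?_⟩
  set ε := min 1 (a^2/(64*(|a|+2))) with hε
  have hε1 : ε ≤ 1 := min_le_left _ _
  have hε2 : ε ≤ a^2/(64*(|a|+2)) := min_le_right _ _
  have h0 : (0:ℝ) < |a|+2 := by positivity
  have hεa : ε * (|a|+2) ≤ a^2/64 := by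
    calc ε * (|a|+2) ≤ a^2/(64*(|a|+2)) * (|a|+2) := mul_le_mul_of_nonneg_right hε2 h0.le
    _ = a^2/64 := by field_simp
  have hεsmall : ε ≤ |a|/64 := by
    have h1 : a^2 ≤ |a| * (|a|+2) := by nlinarith [sq_abs a]
    calc ε ≤ a^2/(64*(|a|+2)) := hε2
    _ ≤ |a|/64 := by rw [div_le_div_iff₀ (by positivity) (by norm_num)]; nlinarith
  have hT' := abs_le.1 hT
  have hD' := abs_le.1 hD
  constructor
  · -- normSq bound
    have h2 : ν^2 = (T:ℂ)*ν - (D:ℂ) := by linear_combination hν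
    have hn : ‖ν‖^2 ≤ |T| * ‖ν‖ + |D| := by
      calc ‖ν‖^2 = ‖ν^2‖ := by rw [norm_pow]
      _ = ‖(T:ℂ)*ν - (D:ℂ)‖ := by rw [h2]
      _ ≤ ‖(T:ℂ)*ν‖ + ‖(D:ℂ)‖ := norm_sub_le _ _
      _ = |T| * ‖ν‖ + |D| := by rw [norm_mul, Complex.norm_real, Complex.norm_real]; rfl
    have hTb : |T| ≤ 2*|a| + 1 := by
      have h3 := abs_sub_abs_le_abs_sub T (2*a)
      have h2a : |2*a| = 2*|a| := by rw [abs_mul]; norm_num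
      nlinarith [abs_nonneg (T - 2*a)]
    have hDb : |D| ≤ a^2+b^2+1 := by
      have h3 := abs_sub_abs_le_abs_sub D (a^2+b^2)
      have h4 : |a^2+b^2| = a^2+b^2 := abs_of_nonneg (by positivity)
      nlinarith
    have hns : Complex.normSq ν = ‖ν‖^2 := by
      rw [Complex.sq_norm]
    rcases le_or_gt ‖ν‖ 1 with h | h
    · rw [hns]
      have h9 : ‖ν‖^2 ≤ 1 := by nlinarith [norm_nonneg ν]
      exact h9.trans (le_max_left _ _)
    · have hle : ‖ν‖ ≤ (2*|a|+1) + (a^2+b^2+1) := by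
        have h5 : ‖ν‖^2 ≤ (|T| + |D|) * ‖ν‖ := by nlinarith [abs_nonneg D]
        have h6 : ‖ν‖ ≤ |T| + |D| := by nlinarith
        linarith
      rw [hns]
      exact (pow_le_pow_left₀ (norm_nonneg ν) hle 2).trans (le_max_right _ _)
  · -- real part bound
    have him : ν.im * (2*ν.re - T) = 0 := by
      have h7 := congrArg Complex.im hν
      simp only [Complex.add_im, Complex.sub_im, Complex.mul_im, Complex.ofReal_re,
        Complex.ofReal_im, pow_two, Complex.zero_im] at h7
      linear_combination h7
    have hre : ν.re*ν.re - ν.im*ν.im - T*ν.re + D = 0 := by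
      have h8 := congrArg Complex.re hν
      simp only [Complex.add_re, Complex.sub_re, Complex.mul_re, Complex.ofReal_re,
        Complex.ofReal_im, pow_two, Complex.zero_re] at h8
      linear_combination h8
    set p := ν.re with hp
    set q := ν.im with hq
    rcases mul_eq_zero.1 him with hq0 | hpT
    · -- q = 0 : real eigenvalue
      have hsq : (p - T/2)^2 ≤ ε*(|a|+2) := by
        have h1 : (p - T/2)^2 = T^2/4 - D := by nlinarith [hre, hq0, sq_nonneg q]
        have h2 : T^2/4 - a^2 ≤ ε*(4*|a|+1)/4 := by
          have habs : |T + 2*a| ≤ 4*|a|+1 := by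
            have h4a : |4*a| = 4*|a| := by rw [abs_mul]; norm_num
            calc |T + 2*a| = |(T - 2*a) + 4*a| := by ring_nf
            _ ≤ |T - 2*a| + |4*a| := abs_add_le _ _
            _ ≤ ε + 4*|a| := by rw [h4a]; linarith
            _ ≤ 4*|a|+1 := by linarith
          have h9 : T^2 - 4*a^2 = (T - 2*a)*(T + 2*a) := by ring
          nlinarith [abs_mul (T - 2*a) (T + 2*a), abs_nonneg (T - 2*a), abs_nonneg (T + 2*a),
            le_abs_self ((T - 2*a)*(T + 2*a))]
        nlinarith [hD'.1, sq_abs a]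
      have hsq' : (p - T/2)^2 ≤ (|a|/8)^2 := by
        calc (p - T/2)^2 ≤ ε*(|a|+2) := hsq
        _ ≤ a^2/64 := hεa
        _ = (|a|/8)^2 := by rw [← sq_abs a]; ring
      rw [abs_le]
      constructor <;>
        nlinarith [hsq', sq_nonneg (p - T/2 + |a|/8), sq_nonneg (p - T/2 - |a|/8)]
    · -- p = T/2
      have hpT' : p = T/2 := by linarith
      rw [abs_le]
      constructor <;> nlinarith

lemma key (F G : (Fin 2 → ℝ) → Fin 2 → ℝ)
    (hFa : AnalyticOnNhd ℝ F Set.univ) (hGa : AnalyticOnNhd ℝ G Set.univ)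
    (p : Fin 2 → ℝ) (hF0 : F p = 0) (a b : ℝ) (ha : a ≠ 0)
    (hDF : HasFDerivAt F (Matrix.mulVecLin !![a, -b; b, a]).toContinuousLinearMap p) :
    ∃ (W δ ρ : ℝ), 0 < W ∧ 0 < δ ∧ 0 < ρ ∧
      ∃ x₀ : ℝ × ℝ → Fin 2 → ℝ,
        AnalyticOnNhd ℝ x₀ {l : ℝ × ℝ | 0 < |l.1| ∧ |l.1| < δ ∧ |l.2| < W * |l.1|} ∧
        (∀ l : ℝ × ℝ, 0 < |l.1| → |l.1| < δ → |l.2| < W * |l.1| →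
          (‖x₀ l - p‖ < ρ ∧ Pmap F G (x₀ l) l = x₀ l ∧
            (∀ y : Fin 2 → ℝ, ‖y - p‖ < ρ → Pmap F G y l = y → y = x₀ l)) ∧
          ∃ M : Matrix (Fin 2) (Fin 2) ℝ,
            HasFDerivAt (fun x => Pmap F G x l) (Matrix.mulVecLin M).toContinuousLinearMap
              (x₀ l) ∧
            (l.1 * a < 0 → ∀ μ ∈ eigM M, ‖μ‖ < 1) ∧
            (l.1 * a > 0 → ∀ μ ∈ eigM M, 1 < ‖μ‖)) ∧
        (∀ ε > (0:ℝ), ∃ η > (0:ℝ), ∀ l : ℝ × ℝ, 0 < |l.1| → |l.1| < δ → |l.2| < W * |l.1| →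
          |l.2| < η * |l.1| → ‖x₀ l - p‖ < ε) := by
  classical
  have hd : a^2 + b^2 ≠ 0 := by positivity
  set Am : Matrix (Fin 2) (Fin 2) ℝ := !![a, -b; b, a] with hAm
  set Ai : Matrix (Fin 2) (Fin 2) ℝ :=
    !![a/(a^2+b^2), b/(a^2+b^2); -b/(a^2+b^2), a/(a^2+b^2)] with hAi
  have hAi1 : Ai * Am = 1 := by
    ext i j
    fin_cases i <;> fin_cases j <;>
      simp [hAm, hAi, Matrix.mul_apply, Fin.sum_univ_two, Matrix.one_apply] <;>
      field_simp <;> ring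
  have hAi2 : Am * Ai = 1 := by
    ext i j
    fin_cases i <;> fin_cases j <;>
      simp [hAm, hAi, Matrix.mul_apply, Fin.sum_univ_two, Matrix.one_apply] <;>
      field_simp <;> ring
  -- the map Φ
  set Φ : ((Fin 2 → ℝ) × ℝ) → ((Fin 2 → ℝ) × ℝ) :=
    fun z => (F z.1 + z.2 • G z.1, z.2) with hΦ
  have hΦa : ∀ z, AnalyticAt ℝ Φ z := by
    intro z
    exact (((hFa _ trivial).comp analyticAt_fst).add
      (analyticAt_snd.smul ((hGa _ trivial).comp analyticAt_fst))).prod analyticAt_snd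
  -- continuous linear maps
  set fstL := ContinuousLinearMap.fst ℝ (Fin 2 → ℝ) ℝ with hfstL
  set sndL := ContinuousLinearMap.snd ℝ (Fin 2 → ℝ) ℝ with hsndL
  set A := (Matrix.mulVecLin Am).toContinuousLinearMap with hA
  set Aic := (Matrix.mulVecLin Ai).toContinuousLinearMap with hAic
  set L : ((Fin 2 → ℝ) × ℝ) →L[ℝ] ((Fin 2 → ℝ) × ℝ) :=
    (A.comp fstL + sndL.smulRight (G p)).prod sndL with hL
  set Linv : ((Fin 2 → ℝ) × ℝ) →L[ℝ] ((Fin 2 → ℝ) × ℝ) :=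
    (Aic.comp (fstL - sndL.smulRight (G p))).prod sndL with hLinv
  have hmulAi : ∀ v : Fin 2 → ℝ, Ai.mulVec (Am.mulVec v) = v := by
    intro v; rw [Matrix.mulVec_mulVec, hAi1, Matrix.one_mulVec]
  have hmulAm : ∀ v : Fin 2 → ℝ, Am.mulVec (Ai.mulVec v) = v := by
    intro v; rw [Matrix.mulVec_mulVec, hAi2, Matrix.one_mulVec]
  have hleft : Function.LeftInverse Linv L := by
    intro z
    simp only [hL, hLinv, ContinuousLinearMap.prod_apply, ContinuousLinearMap.comp_apply,
      ContinuousLinearMap.add_apply, ContinuousLinearMap.sub_apply,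
      ContinuousLinearMap.smulRight_apply, hfstL, hsndL, ContinuousLinearMap.coe_fst',
      ContinuousLinearMap.coe_snd', hA, hAic, LinearMap.coe_toContinuousLinearMap',
      Matrix.mulVecLin_apply]
    refine Prod.ext ?_ rfl
    simp only [add_sub_cancel_right]
    exact hmulAi z.1
  have hright : Function.RightInverse Linv L := by
    intro z
    simp only [hL, hLinv, ContinuousLinearMap.prod_apply, ContinuousLinearMap.comp_apply,
      ContinuousLinearMap.add_apply, ContinuousLinearMap.sub_apply,
      ContinuousLinearMap.smulRight_apply, hfstL, hsndL, ContinuousLinearMap.coe_fst',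
      ContinuousLinearMap.coe_snd', hA, hAic, LinearMap.coe_toContinuousLinearMap',
      Matrix.mulVecLin_apply]
    refine Prod.ext ?_ rfl
    simp only []
    rw [hmulAm, sub_add_cancel]
  set Eeq : ((Fin 2 → ℝ) × ℝ) ≃L[ℝ] ((Fin 2 → ℝ) × ℝ) :=
    ContinuousLinearEquiv.equivOfInverse L Linv hleft hright with hEeq
  -- strict derivative of Φ at (p, 0)
  have hGd : HasFDerivAt G (fderiv ℝ G p) p := (hGa p trivial).differentiableAt.hasFDerivAt
  have h5 : HasFDerivAt Φ L (p, 0) := by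
    have h1 : HasFDerivAt (fun z : (Fin 2 → ℝ) × ℝ => F z.1) (A.comp fstL) (p, 0) :=
      hDF.comp _ (hasFDerivAt_fst)
    have h2 : HasFDerivAt (fun z : (Fin 2 → ℝ) × ℝ => G z.1)
        ((fderiv ℝ G p).comp fstL) (p, 0) := hGd.comp _ (hasFDerivAt_fst)
    have h3 := (hasFDerivAt_snd (𝕜 := ℝ) (p := (p, (0:ℝ)))).smul h2
    simp only [zero_smul, zero_add] at h3
    exact HasFDerivAt.prodMk (h1.add h3) (hasFDerivAt_snd)
  have hstrictΦ : HasStrictFDerivAt Φ (Eeq : ((Fin 2 → ℝ) × ℝ) →L[ℝ] ((Fin 2 → ℝ) × ℝ))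
      (p, 0) := by
    have h6 := (hΦa (p, 0)).hasStrictFDerivAt
    rw [h5.fderiv] at h6
    exact h6
  set Ψ := HasStrictFDerivAt.toOpenPartialHomeomorph Φ hstrictΦ with hΨ
  have hΨcoe : ⇑Ψ = Φ := hstrictΦ.toOpenPartialHomeomorph_coe
  have hsrc : (p, (0:ℝ)) ∈ Ψ.source := hstrictΦ.mem_toOpenPartialHomeomorph_source
  -- continuity of the derivative, invertibility near (p,0)
  have hΦcont : Continuous (fderiv ℝ Φ) := by
    rw [← continuousOn_univ]
    exact (AnalyticOnNhd.fderiv (fun z _ => hΦa z)).continuousOn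
  set U : Set ((Fin 2 → ℝ) × ℝ) := {z | IsUnit (fderiv ℝ Φ z)} with hU
  have hUopen : IsOpen U := Units.isOpen.preimage hΦcont
  have hU0 : (p, (0:ℝ)) ∈ U := by
    have hmul1 : L * Linv = 1 := ContinuousLinearMap.ext fun z => hright z
    have hmul2 : Linv * L = 1 := ContinuousLinearMap.ext fun z => hleft z
    show IsUnit (fderiv ℝ Φ (p, (0:ℝ)))
    rw [h5.fderiv]
    exact ⟨⟨L, Linv, hmul1, hmul2⟩, rfl⟩
  -- Jacobian entries and trace/determinant functions
  set DF := fderiv ℝ F with hDFdef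
  set DG := fderiv ℝ G with hDGdef
  have hDFc : Continuous DF := by
    rw [← continuousOn_univ]; exact hFa.fderiv.continuousOn
  have hDGc : Continuous DG := by
    rw [← continuousOn_univ]; exact hGa.fderiv.continuousOn
  set Nmat : ((Fin 2 → ℝ) × ℝ) → Matrix (Fin 2) (Fin 2) ℝ :=
    fun z => LinearMap.toMatrix' (DF z.1 : (Fin 2 → ℝ) →ₗ[ℝ] (Fin 2 → ℝ)) +
      z.2 • LinearMap.toMatrix' (DG z.1 : (Fin 2 → ℝ) →ₗ[ℝ] (Fin 2 → ℝ)) with hNmat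
  have hEnt : ∀ (H : (Fin 2 → ℝ) → Fin 2 → ℝ), Continuous (fderiv ℝ H) → ∀ i j,
      Continuous fun x : Fin 2 → ℝ =>
        (LinearMap.toMatrix' (fderiv ℝ H x : (Fin 2 → ℝ) →ₗ[ℝ] (Fin 2 → ℝ))) i j := by
    intro H hc i j
    simp only [LinearMap.toMatrix'_apply, ContinuousLinearMap.coe_coe]
    exact (continuous_apply i).comp (hc.clm_apply continuous_const)
  have hNc : ∀ i j, Continuous fun z : ((Fin 2 → ℝ) × ℝ) => Nmat z i j := by
    intro i j
    simp only [hNmat, Matrix.add_apply, Matrix.smul_apply, smul_eq_mul]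
    exact ((hEnt F hDFc i j).comp continuous_fst).add
      (continuous_snd.mul ((hEnt G hDGc i j).comp continuous_fst))
  set Tf : ((Fin 2 → ℝ) × ℝ) → ℝ := fun z => Nmat z 0 0 + Nmat z 1 1 with hTf
  set Df : ((Fin 2 → ℝ) × ℝ) → ℝ :=
    fun z => Nmat z 0 0 * Nmat z 1 1 - Nmat z 0 1 * Nmat z 1 0 with hDf
  have hTc : Continuous Tf := (hNc 0 0).add (hNc 1 1)
  have hDc : Continuous Df := ((hNc 0 0).mul (hNc 1 1)).sub ((hNc 0 1).mul (hNc 1 0))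
  -- value at (p, 0)
  have hN0 : Nmat (p, (0:ℝ)) = Am := by
    have h7 : DF p = A := hDF.fderiv
    simp only [hNmat, h7, zero_smul, add_zero, hA, LinearMap.coe_toContinuousLinearMap]
    rw [← Matrix.toLin'_apply']
    exact LinearMap.toMatrix'_toLin' Am
  have hT0 : Tf (p, (0:ℝ)) = 2*a := by
    simp only [hTf, hN0, hAm]
    norm_num [Matrix.cons_val_zero, Matrix.cons_val_one, Matrix.head_cons]
    ring
  have hD0 : Df (p, (0:ℝ)) = a^2 + b^2 := by
    simp only [hDf, hN0, hAm]
    norm_num [Matrix.cons_val_zero, Matrix.cons_val_one, Matrix.head_cons]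
    ring
  -- constants from the eigenvalue estimate
  obtain ⟨ε, hε, C, hC, hest⟩ := nu_est a b ha
  -- radius on the source side
  obtain ⟨r₁, hr₁, hball₁⟩ := Metric.isOpen_iff.1 Ψ.open_source _ hsrc
  obtain ⟨r₂, hr₂, hball₂⟩ := Metric.isOpen_iff.1 hUopen _ hU0
  have hTD : ∀ᶠ z in nhds (p, (0:ℝ)), |Tf z - 2*a| ≤ ε ∧ |Df z - (a^2+b^2)| ≤ ε := by
    have h1 : ∀ᶠ z in nhds (p, (0:ℝ)), Tf z ∈ Metric.closedBall (2*a) ε := by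
      apply hTc.continuousAt.preimage_mem_nhds
      rw [← hT0] at *
      exact Metric.closedBall_mem_nhds _ hε
    have h2 : ∀ᶠ z in nhds (p, (0:ℝ)), Df z ∈ Metric.closedBall (a^2+b^2) ε := by
      apply hDc.continuousAt.preimage_mem_nhds
      rw [← hD0] at *
      exact Metric.closedBall_mem_nhds _ hε
    filter_upwards [h1, h2] with z hz1 hz2
    rw [Metric.mem_closedBall, Real.dist_eq] at hz1 hz2
    exact ⟨hz1, hz2⟩
  obtain ⟨r₃, hr₃, hball₃⟩ := Metric.eventually_nhds_iff_ball.1 hTD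
  set r := min r₁ (min r₂ r₃) with hr_def
  have hr : 0 < r := lt_min hr₁ (lt_min hr₂ hr₃)
  -- target-side neighbourhood control
  have hΦp0 : Φ (p, (0:ℝ)) = ((0 : Fin 2 → ℝ), (0:ℝ)) := by
    simp [hΦ, hF0]
  have hΨp0 : Ψ (p, (0:ℝ)) = ((0 : Fin 2 → ℝ), (0:ℝ)) := by rw [hΨcoe]; exact hΦp0
  have htgt0 : ((0 : Fin 2 → ℝ), (0:ℝ)) ∈ Ψ.target := by
    rw [← hΨp0]; exact Ψ.map_source hsrc
  have hsymm0 : Ψ.symm ((0 : Fin 2 → ℝ), (0:ℝ)) = (p, (0:ℝ)) := by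
    rw [← hΨp0]; exact Ψ.left_inv hsrc
  have hnbhd : ∀ ρ' > (0:ℝ), ∃ W' > (0:ℝ), ∀ t : ℝ, |t| < W' →
      ((0 : Fin 2 → ℝ), t) ∈ Ψ.target ∧
        dist (Ψ.symm ((0 : Fin 2 → ℝ), t)) (p, (0:ℝ)) < ρ' := by
    intro ρ' hρ'
    have hSopen : IsOpen (Ψ.target ∩ Ψ.symm ⁻¹' (Metric.ball (p, (0:ℝ)) ρ')) :=
      Ψ.isOpen_inter_preimage_symm Metric.isOpen_ball
    have hS0 : ((0 : Fin 2 → ℝ), (0:ℝ)) ∈ Ψ.target ∩ Ψ.symm ⁻¹' (Metric.ball (p, (0:ℝ)) ρ') := by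
      refine ⟨htgt0, ?_⟩
      simp only [Set.mem_preimage, hsymm0, Metric.mem_ball, dist_self]
      exact hρ'
    obtain ⟨W', hW', hbW⟩ := Metric.isOpen_iff.1 hSopen _ hS0
    refine ⟨W', hW', fun t htW => ?_⟩
    have hmem : ((0 : Fin 2 → ℝ), t) ∈ Metric.ball ((0 : Fin 2 → ℝ), (0:ℝ)) W' := by
      rw [Metric.mem_ball, Prod.dist_eq]
      simp only [dist_self, Real.dist_eq, sub_zero]
      exact max_lt hW' htW
    have := hbW hmem
    exact ⟨this.1, by simpa [Metric.mem_ball] using this.2⟩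
  obtain ⟨W₀, hW₀, hWprop⟩ := hnbhd r hr
  -- the final constants
  set W := min W₀ r with hW_def
  have hW : 0 < W := lt_min hW₀ hr
  set δ := |a| / ((2*π) * (C+1)) with hδ_def
  have hδ : 0 < δ := by
    apply div_pos (abs_pos.2 ha)
    positivity
  set g : ℝ → ((Fin 2 → ℝ) × ℝ) := fun t => Ψ.symm ((0 : Fin 2 → ℝ), t) with hgdef
  set x₀ : ℝ × ℝ → Fin 2 → ℝ := fun l => (g (l.2 / l.1)).1 with hx₀
  have hrr₁ : r ≤ r₁ := min_le_left _ _
  have hrr₂ : r ≤ r₂ := (min_le_right _ _).trans (min_le_left _ _)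
  have hrr₃ : r ≤ r₃ := (min_le_right _ _).trans (min_le_right _ _)
  have hgfacts : ∀ t : ℝ, |t| < W →
      g t ∈ Ψ.source ∧ dist (g t) (p, (0:ℝ)) < r ∧ (g t).2 = t ∧
        F (g t).1 + t • G (g t).1 = 0 := by
    intro t ht
    have htW₀ : |t| < W₀ := lt_of_lt_of_le ht (min_le_left _ _)
    obtain ⟨htgt, hdist⟩ := hWprop t htW₀
    have hsrc' : g t ∈ Ψ.source :=
      hball₁ (Metric.mem_ball.2 (lt_of_lt_of_le hdist hrr₁))
    have hΨg : Ψ (g t) = ((0 : Fin 2 → ℝ), t) := Ψ.right_inv htgt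
    have hΦg : Φ (g t) = ((0 : Fin 2 → ℝ), t) := by rw [← hΨcoe]; exact hΨg
    have h2 : (g t).2 = t := congrArg Prod.snd hΦg
    have h1 : F (g t).1 + t • G (g t).1 = 0 := by
      have h3 := congrArg Prod.fst hΦg
      simp only [hΦ] at h3
      rw [h2] at h3
      exact h3
    exact ⟨hsrc', hdist, h2, h1⟩
  have hfixiff : ∀ (l : ℝ × ℝ), l.1 ≠ 0 → ∀ y : Fin 2 → ℝ,
      (Pmap F G y l = y ↔ F y + (l.2 / l.1) • G y = 0) := by
    intro l hl y
    have h2π : (2*π) ≠ 0 := by positivity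
    have hc : l.1 * (l.2 / l.1) = l.2 := by field_simp
    constructor
    · intro hfix
      have h0 : (2*π) • (l.1 • F y + l.2 • G y) = 0 := by
        have h4 : y + (2*π) • (l.1 • F y + l.2 • G y) = y := hfix
        rwa [add_eq_left] at h4
      have h1 : l.1 • F y + l.2 • G y = 0 := (smul_eq_zero.1 h0).resolve_left h2π
      have h3 : l.1 • (F y + (l.2 / l.1) • G y) = 0 := by
        rw [smul_add, smul_smul, hc]
        exact h1
      exact (smul_eq_zero.1 h3).resolve_left hl
    · intro h1
      have h3 : l.1 • F y + l.2 • G y = 0 := by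
        have h4 := congrArg (fun v : Fin 2 → ℝ => l.1 • v) h1
        simpa [smul_add, smul_smul, hc] using h4
      show y + (2*π) • (l.1 • F y + l.2 • G y) = y
      rw [h3, smul_zero, add_zero]
  refine ⟨W, δ, r, hW, hδ, hr, x₀, ?_, ?_, ?_⟩
  · -- analyticity on the wedge
    intro l hl
    obtain ⟨hl1, hlδ, hlW⟩ := hl
    have hl1' : l.1 ≠ 0 := abs_pos.1 hl1
    have ht : |l.2 / l.1| < W := by rw [abs_div, div_lt_iff₀ hl1]; exact hlW
    obtain ⟨hsrcg, hdistg, hg2, hgfix⟩ := hgfacts _ ht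
    have hUmem : IsUnit (fderiv ℝ Φ (g (l.2 / l.1))) :=
      hball₂ (Metric.mem_ball.2 (lt_of_lt_of_le hdistg hrr₂))
    have hinv1 : ∀ x, hUmem.unit.inv (hUmem.unit.val x) = x := by
      intro x
      calc hUmem.unit.inv (hUmem.unit.val x)
          = (hUmem.unit.inv * hUmem.unit.val) x := rfl
        _ = (1 : ((Fin 2 → ℝ) × ℝ) →L[ℝ] ((Fin 2 → ℝ) × ℝ)) x := by rw [hUmem.unit.inv_val]
        _ = x := rfl
    have hinv2 : ∀ x, hUmem.unit.val (hUmem.unit.inv x) = x := by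
      intro x
      calc hUmem.unit.val (hUmem.unit.inv x)
          = (hUmem.unit.val * hUmem.unit.inv) x := rfl
        _ = (1 : ((Fin 2 → ℝ) × ℝ) →L[ℝ] ((Fin 2 → ℝ) × ℝ)) x := by rw [hUmem.unit.val_inv]
        _ = x := rfl
    set i : ((Fin 2 → ℝ) × ℝ) ≃L[ℝ] ((Fin 2 → ℝ) × ℝ) :=
      ContinuousLinearEquiv.equivOfInverse hUmem.unit.val hUmem.unit.inv hinv1 hinv2 with hi
    have hicoe : (i : ((Fin 2 → ℝ) × ℝ) →L[ℝ] ((Fin 2 → ℝ) × ℝ)) = hUmem.unit.val := rfl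
    have hsymm_an : AnalyticAt ℝ (⇑Ψ.symm) ((0 : Fin 2 → ℝ), l.2 / l.1) := by
      apply Ψ.analyticAt_symm (i := i)
        (hWprop _ (lt_of_lt_of_le ht (min_le_left _ _))).1
      · rw [hΨcoe]; exact hΦa _
      · show fderiv ℝ (⇑Ψ) (Ψ.symm ((0 : Fin 2 → ℝ), l.2 / l.1)) = ↑i
        rw [hΨcoe, hicoe]
        exact hUmem.unit_spec.symm
    have h1an : AnalyticAt ℝ (fun l' : ℝ × ℝ => ((0 : Fin 2 → ℝ), l'.2 / l'.1)) l :=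
      analyticAt_const.prod (analyticAt_snd.div analyticAt_fst hl1')
    have h2an : AnalyticAt ℝ (fun l' : ℝ × ℝ => Ψ.symm ((0 : Fin 2 → ℝ), l'.2 / l'.1)) l :=
      AnalyticAt.comp (g := ⇑Ψ.symm)
        (f := fun l' : ℝ × ℝ => ((0 : Fin 2 → ℝ), l'.2 / l'.1)) (x := l) hsymm_an h1an
    exact AnalyticAt.comp (g := Prod.fst)
      (f := fun l' : ℝ × ℝ => Ψ.symm ((0 : Fin 2 → ℝ), l'.2 / l'.1)) (x := l)
      analyticAt_fst h2an
  · -- per-parameter statement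
    intro l hl1 hlδ hlW
    have hl1' : l.1 ≠ 0 := abs_pos.1 hl1
    have hlt : l.2 = l.1 * (l.2 / l.1) := by field_simp
    have ht : |l.2 / l.1| < W := by rw [abs_div, div_lt_iff₀ hl1]; exact hlW
    obtain ⟨hsrcg, hdistg, hg2, hgfix⟩ := hgfacts _ ht
    have hxρ : ‖x₀ l - p‖ < r := by
      rw [← dist_eq_norm]
      exact lt_of_le_of_lt (by rw [Prod.dist_eq]; exact le_max_left _ _) hdistg
    have htr : |l.2 / l.1| < r := lt_of_lt_of_le ht (min_le_right _ _)
    constructor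
    · refine ⟨hxρ, (hfixiff l hl1' _).2 hgfix, ?_⟩
      intro y hyρ hyfix
      have h1 : F y + (l.2 / l.1) • G y = 0 := (hfixiff l hl1' y).1 hyfix
      have hymem : (y, l.2 / l.1) ∈ Ψ.source := by
        apply hball₁
        rw [Metric.mem_ball, Prod.dist_eq]
        apply max_lt
        · rw [dist_eq_norm]; exact lt_of_lt_of_le hyρ hrr₁
        · rw [Real.dist_eq, sub_zero]; exact lt_of_lt_of_le htr hrr₁
      have hΨy : Ψ (y, l.2 / l.1) = ((0 : Fin 2 → ℝ), l.2 / l.1) := by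
        rw [hΨcoe]
        simp only [hΦ]
        exact Prod.ext h1 rfl
      have hΨg : Ψ (g (l.2 / l.1)) = ((0 : Fin 2 → ℝ), l.2 / l.1) :=
        Ψ.right_inv (hWprop _ (lt_of_lt_of_le ht (min_le_left _ _))).1
      have h2 := Ψ.injOn hymem hsrcg (hΨy.trans hΨg.symm)
      exact congrArg Prod.fst h2
    · -- derivative and eigenvalues
      have hFd : HasFDerivAt F (DF (x₀ l)) (x₀ l) :=
        (hFa _ trivial).differentiableAt.hasFDerivAt
      have hGd' : HasFDerivAt G (DG (x₀ l)) (x₀ l) :=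
        (hGa _ trivial).differentiableAt.hasFDerivAt
      refine ⟨1 + (2*π*l.1) • Nmat (g (l.2 / l.1)), ?_, ?_, ?_⟩
      · -- HasFDerivAt
        have hcomb : HasFDerivAt (fun x => Pmap F G x l)
            (ContinuousLinearMap.id ℝ (Fin 2 → ℝ) +
              (2*π) • (l.1 • DF (x₀ l) + l.2 • DG (x₀ l))) (x₀ l) :=
          (hasFDerivAt_id (x₀ l)).add
            (((hFd.const_smul l.1).add (hGd'.const_smul l.2)).const_smul (2*π))
        have heq : (Matrix.mulVecLin (1 + (2*π*l.1) • Nmat (g (l.2 / l.1)))).toContinuousLinearMap =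
            ContinuousLinearMap.id ℝ (Fin 2 → ℝ) +
              (2*π) • (l.1 • DF (x₀ l) + l.2 • DG (x₀ l)) := by
          apply ContinuousLinearMap.ext
          intro v
          have hJf : (LinearMap.toMatrix'
              (DF (x₀ l) : (Fin 2 → ℝ) →ₗ[ℝ] (Fin 2 → ℝ))).mulVec v = DF (x₀ l) v := by
            rw [← Matrix.mulVecLin_apply, ← Matrix.toLin'_apply', Matrix.toLin'_toMatrix']; rfl
          have hJg : (LinearMap.toMatrix'
              (DG (x₀ l) : (Fin 2 → ℝ) →ₗ[ℝ] (Fin 2 → ℝ))).mulVec v = DG (x₀ l) v := by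
            rw [← Matrix.mulVecLin_apply, ← Matrix.toLin'_apply', Matrix.toLin'_toMatrix']; rfl
          have hc2 : (2*π*l.1) * (l.2 / l.1) = 2*π*l.2 := by field_simp
          simp only [hx₀] at hJf hJg
          simp only [LinearMap.coe_toContinuousLinearMap', Matrix.mulVecLin_apply,
            Matrix.add_mulVec, Matrix.one_mulVec, Matrix.smul_mulVec,
            hNmat, hx₀, hg2, ContinuousLinearMap.add_apply, ContinuousLinearMap.coe_id',
            ContinuousLinearMap.smul_apply, id_eq, hJf, hJg]
          simp only [smul_add, smul_smul]
          rw [hc2]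
        rw [heq]; exact hcomb
      · -- contracting case
        intro hsign μ hμ
        have hs0 : 2*π*l.1 ≠ 0 := mul_ne_zero (by positivity) hl1'
        obtain ⟨ν, hμν, hνeq⟩ := quad_of_mem (Nmat (g (l.2 / l.1))) (2*π*l.1) hs0 μ hμ
        obtain ⟨hTb, hDb⟩ := hball₃ _ (Metric.mem_ball.2 (lt_of_lt_of_le hdistg hrr₃))
        obtain ⟨hνC, hνre⟩ := hest _ _ hTb hDb ν hνeq
        have hsC : |2*π*l.1| * C < |a| := by
          have h8 : |2*π*l.1| = 2*π*|l.1| := by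
            rw [abs_mul, abs_of_pos (by positivity : (0:ℝ) < 2*π)]
          rw [h8]
          have h9 : 2*π*|l.1| < 2*π*δ :=
            (mul_lt_mul_iff_right₀ (by positivity : (0:ℝ) < 2*π)).2 hlδ
          have h10 : 2*π*δ*(C+1) = |a| := by
            rw [hδ_def]; field_simp
          calc 2*π*|l.1| * C ≤ 2*π*δ*C := mul_le_mul_of_nonneg_right h9.le hC.le
          _ < 2*π*δ*(C+1) :=
            (mul_lt_mul_iff_right₀ (mul_pos (by positivity : (0:ℝ) < 2*π) hδ)).2 (lt_add_one C)
          _ = |a| := h10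
        have hnormsq : Complex.normSq μ =
            1 + (2*π*l.1)*(2*ν.re + (2*π*l.1)*Complex.normSq ν) := by
          rw [hμν]
          simp only [Complex.normSq_apply, Complex.add_re, Complex.add_im, Complex.mul_re,
            Complex.mul_im, Complex.ofReal_re, Complex.ofReal_im, Complex.one_re, Complex.one_im]
          ring
        have habs4 := abs_le.1 hνre
        have hnsq0 := Complex.normSq_nonneg ν
        have hsa : (2*π*l.1) * a < 0 := by
          have h7 : (2*π*l.1) * a = (2*π) * (l.1 * a) := by ring
          rw [h7]
          exact mul_neg_of_pos_of_neg (by positivity) hsign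
        have hfin : Complex.normSq μ < 1 := by
          rw [hnormsq]
          rcases lt_or_gt_of_ne ha with haneg | hapos
          · have habsa : |a| = -a := abs_of_neg haneg
            have hspos : 0 < 2*π*l.1 := by
              by_contra h
              push_neg at h
              have h16 := mul_nonneg (neg_nonneg.2 h) (neg_nonneg.2 haneg.le)
              rw [neg_mul_neg] at h16
              exact absurd h16 (not_le.2 hsa)
            have h11 : ν.re ≤ 3*a/4 := by rw [habsa] at habs4; linarith [habs4.2]
            have h12 : (2*π*l.1)*Complex.normSq ν ≤ (2*π*l.1)*C :=
              mul_le_mul_of_nonneg_left hνC hspos.le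
            have h13 : (2*π*l.1)*C < -a := by
              rw [habsa, abs_of_pos hspos] at hsC; linarith
            have h14 : 2*ν.re + (2*π*l.1)*Complex.normSq ν < 0 := by linarith
            linarith [mul_neg_of_pos_of_neg hspos h14]
          · have habsa : |a| = a := abs_of_pos hapos
            have hsneg : 2*π*l.1 < 0 := by
              by_contra h
              push_neg at h
              exact absurd (mul_nonneg h hapos.le) (not_le.2 hsa)
            have h11 : 3*a/4 ≤ ν.re := by rw [habsa] at habs4; linarith [habs4.1]
            have h12 : (2*π*l.1)*C ≤ (2*π*l.1)*Complex.normSq ν :=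
              mul_le_mul_of_nonpos_left hνC hsneg.le
            have h13 : -a < (2*π*l.1)*C := by
              rw [habsa, abs_of_neg hsneg] at hsC; linarith
            have h14 : 0 < 2*ν.re + (2*π*l.1)*Complex.normSq ν := by linarith
            linarith [mul_neg_of_neg_of_pos hsneg h14]
        have h15 : ‖μ‖^2 < 1 := by rw [Complex.sq_norm]; exact hfin
        by_contra hcon
        push_neg at hcon
        rw [pow_two] at h15
        linarith [mul_le_mul hcon hcon zero_le_one (norm_nonneg μ)]
      · -- expanding case
        intro hsign μ hμ
        have hs0 : 2*π*l.1 ≠ 0 := mul_ne_zero (by positivity) hl1'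
        obtain ⟨ν, hμν, hνeq⟩ := quad_of_mem (Nmat (g (l.2 / l.1))) (2*π*l.1) hs0 μ hμ
        obtain ⟨hTb, hDb⟩ := hball₃ _ (Metric.mem_ball.2 (lt_of_lt_of_le hdistg hrr₃))
        obtain ⟨hνC, hνre⟩ := hest _ _ hTb hDb ν hνeq
        have hsC : |2*π*l.1| * C < |a| := by
          have h8 : |2*π*l.1| = 2*π*|l.1| := by
            rw [abs_mul, abs_of_pos (by positivity : (0:ℝ) < 2*π)]
          rw [h8]
          have h9 : 2*π*|l.1| < 2*π*δ :=
            (mul_lt_mul_iff_right₀ (by positivity : (0:ℝ) < 2*π)).2 hlδ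
          have h10 : 2*π*δ*(C+1) = |a| := by
            rw [hδ_def]; field_simp
          calc 2*π*|l.1| * C ≤ 2*π*δ*C := mul_le_mul_of_nonneg_right h9.le hC.le
          _ < 2*π*δ*(C+1) :=
            (mul_lt_mul_iff_right₀ (mul_pos (by positivity : (0:ℝ) < 2*π) hδ)).2 (lt_add_one C)
          _ = |a| := h10
        have hnormsq : Complex.normSq μ =
            1 + (2*π*l.1)*(2*ν.re + (2*π*l.1)*Complex.normSq ν) := by
          rw [hμν]
          simp only [Complex.normSq_apply, Complex.add_re, Complex.add_im, Complex.mul_re,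
            Complex.mul_im, Complex.ofReal_re, Complex.ofReal_im, Complex.one_re, Complex.one_im]
          ring
        have habs4 := abs_le.1 hνre
        have hnsq0 := Complex.normSq_nonneg ν
        have hsa : 0 < (2*π*l.1) * a := by
          have h7 : (2*π*l.1) * a = (2*π) * (l.1 * a) := by ring
          rw [h7]
          exact mul_pos (by positivity) hsign
        have hfin : 1 < Complex.normSq μ := by
          rw [hnormsq]
          rcases lt_or_gt_of_ne ha with haneg | hapos
          · have habsa : |a| = -a := abs_of_neg haneg
            have hsneg : 2*π*l.1 < 0 := by
              by_contra h
              push_neg at h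
              exact absurd hsa (not_lt.2 (mul_nonpos_of_nonneg_of_nonpos h haneg.le))
            have h11 : ν.re ≤ 3*a/4 := by rw [habsa] at habs4; linarith [habs4.2]
            have h12 : (2*π*l.1)*Complex.normSq ν ≤ 0 :=
              mul_nonpos_of_nonpos_of_nonneg hsneg.le hnsq0
            have h14 : 2*ν.re + (2*π*l.1)*Complex.normSq ν < 0 := by linarith
            linarith [mul_pos_of_neg_of_neg hsneg h14]
          · have habsa : |a| = a := abs_of_pos hapos
            have hspos : 0 < 2*π*l.1 := by
              by_contra h
              push_neg at h
              exact absurd hsa (not_lt.2 (mul_nonpos_of_nonpos_of_nonneg h hapos.le))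
            have h11 : 3*a/4 ≤ ν.re := by rw [habsa] at habs4; linarith [habs4.1]
            have h12 : 0 ≤ (2*π*l.1)*Complex.normSq ν := mul_nonneg hspos.le hnsq0
            have h14 : 0 < 2*ν.re + (2*π*l.1)*Complex.normSq ν := by linarith
            linarith [mul_pos hspos h14]
        have h15 : 1 < ‖μ‖^2 := by rw [Complex.sq_norm]; exact hfin
        by_contra hcon
        push_neg at hcon
        rw [pow_two] at h15
        linarith [mul_le_mul hcon hcon (norm_nonneg μ) zero_le_one]
  · -- limit towards the axis
    intro ε' hε'
    obtain ⟨η, hη, hηprop⟩ := hnbhd (min ε' r) (lt_min hε' hr)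
    refine ⟨η, hη, fun l hl1 hlδ hlW hlη => ?_⟩
    have hl1' : l.1 ≠ 0 := abs_pos.1 hl1
    have ht : |l.2 / l.1| < η := by rw [abs_div, div_lt_iff₀ hl1]; exact hlη
    have h2 := (hηprop _ ht).2
    have hfst : dist (x₀ l) p ≤ dist (g (l.2 / l.1)) (p, (0:ℝ)) := by
      rw [Prod.dist_eq]; exact le_max_left _ _
    rw [← dist_eq_norm]
    exact lt_of_le_of_lt hfst (lt_of_lt_of_le h2 (min_le_left _ _))

/-- **(P3) of Proposition 4.1 of the paper.**
The truncated map `P(x,λ) = x + 2π[λ₁F₀(x) + λ₂G_ξ(x)]` has, inside a wedge around the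
`λ₁`-axis, a unique real analytic branch of fixed points `x₀(λ)` near `0`, tending to `0`
as `λ` approaches the axis away from the origin, with stability determined by `sign(λ₁ a)`;
and analogously around the `λ₂`-axis, with fixed points near `ξ` and stability determined
by `sign(λ₂ c)`. -/
theorem truncated_map_wedge_branches (ξ : Fin 2 → ℝ) (hξ : ξ ≠ 0)
    (F G : (Fin 2 → ℝ) → Fin 2 → ℝ)
    (hFa : AnalyticOnNhd ℝ F Set.univ) (hGa : AnalyticOnNhd ℝ G Set.univ)
    (hF0 : F 0 = 0) (hGξ : G ξ = 0)
    (a b c d : ℝ) (ha : a ≠ 0) (hc : c ≠ 0)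
    (hDF : HasFDerivAt F (Matrix.mulVecLin !![a, -b; b, a]).toContinuousLinearMap 0)
    (hDG : HasFDerivAt G (Matrix.mulVecLin !![c, -d; d, c]).toContinuousLinearMap ξ) :
    (∃ (W δ ρ : ℝ), 0 < W ∧ 0 < δ ∧ 0 < ρ ∧
      ∃ x₀ : ℝ × ℝ → Fin 2 → ℝ,
        AnalyticOnNhd ℝ x₀ {l : ℝ × ℝ | 0 < |l.1| ∧ |l.1| < δ ∧ |l.2| < W * |l.1|} ∧
        (∀ l : ℝ × ℝ, 0 < |l.1| → |l.1| < δ → |l.2| < W * |l.1| →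
          (‖x₀ l‖ < ρ ∧ Pmap F G (x₀ l) l = x₀ l ∧
            (∀ y : Fin 2 → ℝ, ‖y‖ < ρ → Pmap F G y l = y → y = x₀ l)) ∧
          ∃ M : Matrix (Fin 2) (Fin 2) ℝ,
            HasFDerivAt (fun x => Pmap F G x l) (Matrix.mulVecLin M).toContinuousLinearMap
              (x₀ l) ∧
            (l.1 * a < 0 → ∀ μ ∈ eigM M, ‖μ‖ < 1) ∧
            (l.1 * a > 0 → ∀ μ ∈ eigM M, 1 < ‖μ‖)) ∧
        (∀ ε > (0:ℝ), ∃ η > (0:ℝ), ∀ l : ℝ × ℝ, 0 < |l.1| → |l.1| < δ → |l.2| < W * |l.1| →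
          |l.2| < η * |l.1| → ‖x₀ l‖ < ε)) ∧
    (∃ (W δ ρ : ℝ), 0 < W ∧ 0 < δ ∧ 0 < ρ ∧
      ∃ xξ : ℝ × ℝ → Fin 2 → ℝ,
        AnalyticOnNhd ℝ xξ {l : ℝ × ℝ | 0 < |l.2| ∧ |l.2| < δ ∧ |l.1| < W * |l.2|} ∧
        (∀ l : ℝ × ℝ, 0 < |l.2| → |l.2| < δ → |l.1| < W * |l.2| →
          (‖xξ l - ξ‖ < ρ ∧ Pmap F G (xξ l) l = xξ l ∧
            (∀ y : Fin 2 → ℝ, ‖y - ξ‖ < ρ → Pmap F G y l = y → y = xξ l)) ∧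
          ∃ M : Matrix (Fin 2) (Fin 2) ℝ,
            HasFDerivAt (fun x => Pmap F G x l) (Matrix.mulVecLin M).toContinuousLinearMap
              (xξ l) ∧
            (l.2 * c < 0 → ∀ μ ∈ eigM M, ‖μ‖ < 1) ∧
            (l.2 * c > 0 → ∀ μ ∈ eigM M, 1 < ‖μ‖)) ∧
        (∀ ε > (0:ℝ), ∃ η > (0:ℝ), ∀ l : ℝ × ℝ, 0 < |l.2| → |l.2| < δ → |l.1| < W * |l.2| →
          |l.1| < η * |l.2| → ‖xξ l - ξ‖ < ε)) := by
  constructor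
  · obtain ⟨W, δ, ρ, hW, hδ, hρ, x₀, han, hmain, hlim⟩ :=
      key F G hFa hGa 0 hF0 a b ha hDF
    refine ⟨W, δ, ρ, hW, hδ, hρ, x₀, han, ?_, ?_⟩
    · intro l h1 h2 h3
      obtain ⟨⟨hρ', hfix, huniq⟩, M, hd, he1, he2⟩ := hmain l h1 h2 h3
      exact ⟨⟨by simpa using hρ', hfix,
        fun y hy hyfix => huniq y (by simpa using hy) hyfix⟩, M, hd, he1, he2⟩
    · intro ε hε
      obtain ⟨η, hη, hp⟩ := hlim ε hε
      exact ⟨η, hη, fun l h1 h2 h3 h4 => by simpa using hp l h1 h2 h3 h4⟩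
  · obtain ⟨W, δ, ρ, hW, hδ, hρ, x₀, han, hmain, hlim⟩ :=
      key G F hGa hFa ξ hGξ c d hc hDG
    have hPswap : ∀ (y : Fin 2 → ℝ) (l : ℝ × ℝ),
        Pmap F G y l = Pmap G F y (l.2, l.1) := by
      intro y l
      show y + (2 * π) • (l.1 • F y + l.2 • G y)
        = y + (2 * π) • (l.2 • G y + l.1 • F y)
      rw [add_comm (l.1 • F y)]
    refine ⟨W, δ, ρ, hW, hδ, hρ, fun l => x₀ (l.2, l.1), ?_, ?_, ?_⟩
    · intro l hl
      obtain ⟨h1, h2, h3⟩ := hl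
      exact AnalyticAt.comp (g := x₀) (f := fun l' : ℝ × ℝ => (l'.2, l'.1)) (x := l)
        (han (l.2, l.1) ⟨h1, h2, h3⟩) (analyticAt_snd.prod analyticAt_fst)
    · intro l h1 h2 h3
      obtain ⟨⟨hρ', hfix, huniq⟩, M, hd, he1, he2⟩ := hmain (l.2, l.1) h1 h2 h3
      refine ⟨⟨hρ', ?_, ?_⟩, M, ?_, he1, he2⟩
      · rw [hPswap]; exact hfix
      · intro y hy hyfix
        exact huniq y hy (by rw [← hPswap]; exact hyfix)
      · have heqf : (fun x => Pmap F G x l) = fun x => Pmap G F x (l.2, l.1) := by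
          funext x; exact hPswap x l
        rw [heqf]; exact hd
    · intro ε hε
      obtain ⟨η, hη, hp⟩ := hlim ε hε
      exact ⟨η, hη, fun l h1 h2 h3 h4 => hp (l.2, l.1) h1 h2 h3 h4⟩
end

section
/- Let ξ ≠ 0 in ℝ², let F₀, G_ξ : ℝ² → ℝ² be real analytic, define P(x, λ) = x + 2π[λ₁F₀(x) + λ₂G_ξ(x)], let A(x) be the 2×2 matrix with columns F₀(x) and G_ξ(x), and let Q(x) = [[B(x), C(x)/2], [C(x)/2, E(x)]] with B(x) = det DF₀(x), E(x) = det DG_ξ(x), and C(x) = det DH₁(x) + det DH₂(x) where H₁ = (F₀,₁, G_ξ,₂) and H₂ = (G_ξ,₁, F₀,₂). Suppose x* ∈ ℝ² and λ* ≠ 0 satisfy A(x*)·λ* = 0 and (λ*)ᵀ Q(x*) λ* = 0. Then for every λ in the line spanned by λ*: x* is a fixed point of P(·, λ), and 1 is an eigenvalue of D_xP(x*, λ) (equivalently, det(D_xP(x*, λ) − I) = 0), i.e. x* is a non-hyperbolic fixed point of P(·, λ) for all λ on that line. -/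
open Real Matrix

/-- **Proposition 4.3 (theotherprop) of the paper.**
If `A(x*)·λ* = 0` and `(λ*)ᵀ Q(x*) λ* = 0` with `λ* ≠ 0`, then for every `λ` on the line
spanned by `λ*`, `x*` is a fixed point of `P(·,λ) = · + 2π[λ₁F₀ + λ₂G_ξ]` at which
`D_xP(x*,λ)` has eigenvalue `1` (a non-hyperbolic, fold-degenerate fixed point). -/
theorem fold_degeneracy_along_kernel_line (ξ : Fin 2 → ℝ) (hξ : ξ ≠ 0)
    (F G : (Fin 2 → ℝ) → Fin 2 → ℝ)
    (hFa : AnalyticOnNhd ℝ F Set.univ) (hGa : AnalyticOnNhd ℝ G Set.univ)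
    (xs : Fin 2 → ℝ) (MF MG MH1 MH2 : Matrix (Fin 2) (Fin 2) ℝ)
    (hF : HasFDerivAt F (Matrix.mulVecLin MF).toContinuousLinearMap xs)
    (hG : HasFDerivAt G (Matrix.mulVecLin MG).toContinuousLinearMap xs)
    (hH1 : HasFDerivAt (fun y => ![F y 0, G y 1])
      (Matrix.mulVecLin MH1).toContinuousLinearMap xs)
    (hH2 : HasFDerivAt (fun y => ![G y 0, F y 1])
      (Matrix.mulVecLin MH2).toContinuousLinearMap xs)
    (lams : Fin 2 → ℝ) (hlam : lams ≠ 0)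
    (hker : (Matrix.of fun i => ![F xs i, G xs i]).mulVec lams = 0)
    (hQ : lams ⬝ᵥ
      ((!![MF.det, (MH1.det + MH2.det) / 2;
          (MH1.det + MH2.det) / 2, MG.det]).mulVec lams) = 0) :
    ∀ l ∈ Submodule.span ℝ {lams},
      (xs + (2 * π) • (l 0 • F xs + l 1 • G xs) = xs) ∧
      HasFDerivAt (fun x => x + (2 * π) • (l 0 • F x + l 1 • G x))
        (Matrix.mulVecLin
          ((1 : Matrix (Fin 2) (Fin 2) ℝ)
            + (2 * π) • (l 0 • MF + l 1 • MG))).toContinuousLinearMap xs ∧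
      (((1 : Matrix (Fin 2) (Fin 2) ℝ) + (2 * π) • (l 0 • MF + l 1 • MG))
          - 1).det = 0 := by
  -- component derivatives
  have comp : ∀ (f : (Fin 2 → ℝ) → Fin 2 → ℝ) (M : Matrix (Fin 2) (Fin 2) ℝ),
      HasFDerivAt f (Matrix.mulVecLin M).toContinuousLinearMap xs →
      ∀ i, HasFDerivAt (fun y => f y i)
        ((ContinuousLinearMap.proj i).comp (Matrix.mulVecLin M).toContinuousLinearMap) xs := by
    intro f M hf i
    exact (ContinuousLinearMap.proj i).hasFDerivAt.comp xs hf
  have e10 : ∀ j : Fin 2, MH1 0 j = MF 0 j := by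
    intro j
    have h1 := comp _ _ hH1 0
    have h2 := comp _ _ hF 0
    simp only [Matrix.cons_val_zero] at h1
    have := h1.unique h2
    have := congrFun (congrArg (fun L => L.toFun) this) (Pi.single j 1)
    simpa [Matrix.mulVec_single] using this
  have e11 : ∀ j : Fin 2, MH1 1 j = MG 1 j := by
    intro j
    have h1 := comp _ _ hH1 1
    have h2 := comp _ _ hG 1
    simp only [Matrix.cons_val_one, Matrix.head_cons] at h1
    have := h1.unique h2
    have := congrFun (congrArg (fun L => L.toFun) this) (Pi.single j 1)
    simpa [Matrix.mulVec_single] using this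
  have e20 : ∀ j : Fin 2, MH2 0 j = MG 0 j := by
    intro j
    have h1 := comp _ _ hH2 0
    have h2 := comp _ _ hG 0
    simp only [Matrix.cons_val_zero] at h1
    have := h1.unique h2
    have := congrFun (congrArg (fun L => L.toFun) this) (Pi.single j 1)
    simpa [Matrix.mulVec_single] using this
  have e21 : ∀ j : Fin 2, MH2 1 j = MF 1 j := by
    intro j
    have h1 := comp _ _ hH2 1
    have h2 := comp _ _ hF 1
    simp only [Matrix.cons_val_one, Matrix.head_cons] at h1
    have := h1.unique h2
    have := congrFun (congrArg (fun L => L.toFun) this) (Pi.single j 1)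
    simpa [Matrix.mulVec_single] using this
  have hker' : ∀ i : Fin 2, F xs i * lams 0 + G xs i * lams 1 = 0 := by
    intro i
    have := congrFun hker i
    simpa [Matrix.mulVec, dotProduct, Fin.sum_univ_two] using this
  intro l hl
  rw [Submodule.mem_span_singleton] at hl
  obtain ⟨c, rfl⟩ := hl
  simp only [Pi.smul_apply, smul_eq_mul]
  refine ⟨?_, ?_, ?_⟩
  · have hz : (c * lams 0) • F xs + (c * lams 1) • G xs = 0 := by
      funext i
      have := hker' i
      simp only [Pi.add_apply, Pi.smul_apply, smul_eq_mul, Pi.zero_apply]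
      linear_combination c * this
    rw [hz, smul_zero, add_zero]
  · have h1 : HasFDerivAt (fun x => x + (2 * π) • ((c * lams 0) • F x + (c * lams 1) • G x))
        (ContinuousLinearMap.id ℝ (Fin 2 → ℝ) +
          (2 * π) • ((c * lams 0) • (Matrix.mulVecLin MF).toContinuousLinearMap
            + (c * lams 1) • (Matrix.mulVecLin MG).toContinuousLinearMap)) xs :=
      (hasFDerivAt_id xs).add
        (((hF.const_smul (c * lams 0)).add (hG.const_smul (c * lams 1))).const_smul (2 * π))
    convert h1 using 1
    ext v i
    simp [Matrix.mulVecLin, Matrix.add_mulVec, Matrix.smul_mulVec, Matrix.one_mulVec,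
      Matrix.mulVec, dotProduct, Fin.sum_univ_two, Matrix.one_apply]
  · have hQ' : lams 0 * (MF.det * lams 0 + (MH1.det + MH2.det) / 2 * lams 1)
        + lams 1 * ((MH1.det + MH2.det) / 2 * lams 0 + MG.det * lams 1) = 0 := by
      have := hQ
      simpa [Matrix.mulVec, dotProduct, Fin.sum_univ_two] using this
    have dF := Matrix.det_fin_two MF
    have dG := Matrix.det_fin_two MG
    have dH1 : MH1.det = MF 0 0 * MG 1 1 - MF 0 1 * MG 1 0 := by
      rw [Matrix.det_fin_two, e10 0, e10 1, e11 0, e11 1]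
    have dH2 : MH2.det = MG 0 0 * MF 1 1 - MG 0 1 * MF 1 0 := by
      rw [Matrix.det_fin_two, e20 0, e20 1, e21 0, e21 1]
    have : ((1 : Matrix (Fin 2) (Fin 2) ℝ)
        + (2 * π) • ((c * lams 0) • MF + (c * lams 1) • MG) - 1)
        = (2 * π) • ((c * lams 0) • MF + (c * lams 1) • MG) := by
      rw [add_sub_cancel_left]
    rw [this]
    rw [Matrix.det_fin_two]
    simp only [Matrix.smul_apply, Matrix.add_apply, smul_eq_mul]
    rw [dF, dG, dH1, dH2] at hQ'
    linear_combination 4 * π ^ 2 * c ^ 2 * hQ'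
end

section
/- Let ξ ≠ 0 in ℝ², let F₀, G_ξ : ℝ² → ℝ² be real analytic, define P(x, λ) = x + 2π[λ₁F₀(x) + λ₂G_ξ(x)], let A(x) be the 2×2 matrix with columns F₀(x) and G_ξ(x), write A_{j,1}(x), A_{j,2}(x) for the entries of its j-th row, and set B(x) = det DF₀(x), E(x) = det DG_ξ(x), C(x) = det DH₁(x) + det DH₂(x) with H₁ = (F₀,₁, G_ξ,₂), H₂ = (G_ξ,₁, F₀,₂), Q(x) = [[B(x), C(x)/2], [C(x)/2, E(x)]], and Γ_j(x) = A_{j,2}(x)²B(x) − A_{j,1}(x)A_{j,2}(x)C(x) + A_{j,1}(x)²E(x). Fix j ∈ {1,2} and suppose x* ∈ ℝ² satisfies det A(x*) = 0, (A_{j,1}(x*), A_{j,2}(x*)) ≠ (0,0), Γ_j(x*) = 0, and either (1) B(x*) = 0 and the 2×2 matrix [[A_{j,1}(x*), A_{j,2}(x*)], [C(x*), E(x*)]] has rank at most 1, or (2) B(x*) ≠ 0 and C(x*)² − 4B(x*)E(x*) ≥ 0. Then the kernel L_{x*} = ker A(x*) is a line (one-dimensional), L_{x*} ⊆ K_{x*}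 := { λ : λᵀQ(x*)λ = 0 }, and for every 0 ≠ λ ∈ L_{x*}, x* is a fixed point of P(·, λ) at which D_xP(x*, λ) − I is singular (a fold degeneracy). -/
open Real Matrix

lemma row_eq_of_deriv {f g : (Fin 2 → ℝ) → Fin 2 → ℝ} {x : Fin 2 → ℝ}
    {M N : Matrix (Fin 2) (Fin 2) ℝ}
    (hf : HasFDerivAt f (Matrix.mulVecLin M).toContinuousLinearMap x)
    (hg : HasFDerivAt g (Matrix.mulVecLin N).toContinuousLinearMap x)
    (i i' : Fin 2) (h : ∀ y, f y i = g y i') : M i = N i' := by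
  have hf' : HasFDerivAt (fun y => f y i)
      ((ContinuousLinearMap.proj i).comp (Matrix.mulVecLin M).toContinuousLinearMap) x :=
    (ContinuousLinearMap.proj (R := ℝ) (φ := fun _ : Fin 2 => ℝ) i).hasFDerivAt.comp x hf
  have hg' : HasFDerivAt (fun y => g y i')
      ((ContinuousLinearMap.proj i').comp (Matrix.mulVecLin N).toContinuousLinearMap) x :=
    (ContinuousLinearMap.proj (R := ℝ) (φ := fun _ : Fin 2 => ℝ) i').hasFDerivAt.comp x hg
  have hfg : (fun y => f y i) = fun y => g y i' := funext h
  rw [hfg] at hf'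
  have := hf'.unique hg'
  funext k
  have := congrArg (fun (L : (Fin 2 → ℝ) →L[ℝ] ℝ) => L (Pi.single k 1)) this
  simpa [Matrix.mulVecLin_apply, Matrix.mulVec_single] using this


/-- **Proposition 4.5 (therealprop) of the paper.**
At a point `x*` where `det A(x*) = 0`, the `j`-th row of `A(x*)` is nonzero, the `j`-fold
bifurcation function `Γ_j` vanishes, and one of the two sign conditions holds, the kernel
`L_{x*} = ker A(x*)` is a line contained in the cone `K_{x*} = {λ : λᵀQ(x*)λ = 0}`, and for
every `0 ≠ λ ∈ L_{x*}`, `x*` is a fixed point of `P(·,λ)` at which `D_xP(x*,λ) - I` is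
singular (a fold degeneracy). -/
theorem fold_catastrophe_visual_criterion (ξ : Fin 2 → ℝ) (hξ : ξ ≠ 0)
    (F G : (Fin 2 → ℝ) → Fin 2 → ℝ)
    (hFa : AnalyticOnNhd ℝ F Set.univ) (hGa : AnalyticOnNhd ℝ G Set.univ)
    (xs : Fin 2 → ℝ) (MF MG MH1 MH2 : Matrix (Fin 2) (Fin 2) ℝ)
    (hF : HasFDerivAt F (Matrix.mulVecLin MF).toContinuousLinearMap xs)
    (hG : HasFDerivAt G (Matrix.mulVecLin MG).toContinuousLinearMap xs)
    (hH1 : HasFDerivAt (fun y => ![F y 0, G y 1])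
      (Matrix.mulVecLin MH1).toContinuousLinearMap xs)
    (hH2 : HasFDerivAt (fun y => ![G y 0, F y 1])
      (Matrix.mulVecLin MH2).toContinuousLinearMap xs)
    (j : Fin 2)
    (hdet : (Matrix.of fun i => ![F xs i, G xs i]).det = 0)
    (hrow : (F xs j, G xs j) ≠ (0, 0))
    (hΓ : G xs j ^ 2 * MF.det - F xs j * G xs j * (MH1.det + MH2.det)
        + F xs j ^ 2 * MG.det = 0)
    (hcase :
      (MF.det = 0 ∧
        (!![F xs j, G xs j; MH1.det + MH2.det, MG.det]).rank ≤ 1) ∨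
      (MF.det ≠ 0 ∧ (MH1.det + MH2.det) ^ 2 - 4 * MF.det * MG.det ≥ 0)) :
    Module.finrank ℝ
        (LinearMap.ker (Matrix.mulVecLin (Matrix.of fun i => ![F xs i, G xs i]))) = 1 ∧
    (∀ l ∈ LinearMap.ker (Matrix.mulVecLin (Matrix.of fun i => ![F xs i, G xs i])),
      l ⬝ᵥ ((!![MF.det, (MH1.det + MH2.det) / 2;
          (MH1.det + MH2.det) / 2, MG.det]).mulVec l) = 0) ∧
    (∀ l ∈ LinearMap.ker (Matrix.mulVecLin (Matrix.of fun i => ![F xs i, G xs i])),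
      l ≠ 0 →
        (xs + (2 * π) • (l 0 • F xs + l 1 • G xs) = xs) ∧
        (((1 : Matrix (Fin 2) (Fin 2) ℝ) + (2 * π) • (l 0 • MF + l 1 • MG))
            - 1).det = 0) := by
  set A : Matrix (Fin 2) (Fin 2) ℝ := Matrix.of fun i => ![F xs i, G xs i] with hA
  set a : ℝ := F xs j with ha
  set b : ℝ := G xs j with hb
  have hab : a ^ 2 + b ^ 2 > 0 := by
    have h' : a ≠ 0 ∨ b ≠ 0 := by
      by_contra hc
      push_neg at hc
      exact hrow (by simp [hc.1, hc.2])
    rcases h' with h | h <;> positivity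
  -- row identifications for MH1, MH2
  have e10 : MH1 0 = MF 0 := row_eq_of_deriv hH1 hF 0 0 (fun y => by simp)
  have e11 : MH1 1 = MG 1 := row_eq_of_deriv hH1 hG 1 1 (fun y => by simp)
  have e20 : MH2 0 = MG 0 := row_eq_of_deriv hH2 hG 0 0 (fun y => by simp)
  have e21 : MH2 1 = MF 1 := row_eq_of_deriv hH2 hF 1 1 (fun y => by simp)
  have hC : MH1.det + MH2.det
      = MF 0 0 * MG 1 1 - MF 0 1 * MG 1 0 + (MG 0 0 * MF 1 1 - MG 0 1 * MF 1 0) := by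
    rw [Matrix.det_fin_two, Matrix.det_fin_two, e10, e11, e20, e21]
  -- key quadratic vanishing on kernel
  have hker : ∀ l ∈ LinearMap.ker (Matrix.mulVecLin A), ∀ i, a * l 0 + b * l 1 = 0 ∧
      (F xs i * l 0 + G xs i * l 1 = 0) := by
    intro l hl i
    have h0 : A.mulVec l = 0 := hl
    constructor
    · have := congrFun h0 j
      simpa [hA, Matrix.mulVec, dotProduct, Fin.sum_univ_two, mul_comm] using this
    · have := congrFun h0 i
      simpa [hA, Matrix.mulVec, dotProduct, Fin.sum_univ_two, mul_comm] using this
  have quadzero : ∀ l ∈ LinearMap.ker (Matrix.mulVecLin A),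
      MF.det * l 0 ^ 2 + (MH1.det + MH2.det) * (l 0 * l 1) + MG.det * l 1 ^ 2 = 0 := by
    intro l hl
    have h := (hker l hl 0).1
    have key : (a ^ 2 + b ^ 2) *
        (MF.det * l 0 ^ 2 + (MH1.det + MH2.det) * (l 0 * l 1) + MG.det * l 1 ^ 2) = 0 := by
      linear_combination (l 0 ^ 2 + l 1 ^ 2) * hΓ +
        (MF.det * (a * l 0 - b * l 1) + (MH1.det + MH2.det) * (a * l 1 + b * l 0) +
          MG.det * (b * l 1 - a * l 0)) * h
    rcases mul_eq_zero.mp key with h' | h'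
    · exact absurd h' (ne_of_gt hab)
    · exact h'
  refine ⟨?_, ?_, ?_⟩
  · -- finrank of kernel
    have hlt : LinearMap.ker (Matrix.mulVecLin A) < ⊤ := by
      rw [lt_top_iff_ne_top]
      intro htop
      have h0 := (hker (Pi.single 0 1) (htop ▸ Submodule.mem_top) 0).1
      have h1 := (hker (Pi.single 1 1) (htop ▸ Submodule.mem_top) 0).1
      simp at h0 h1
      exact hrow (by simp [← ha, ← hb, h0, h1])
    have hlow : 0 < Module.finrank ℝ (LinearMap.ker (Matrix.mulVecLin A)) := by
      obtain ⟨v, hv0, hv⟩ := (Matrix.exists_mulVec_eq_zero_iff (M := A)).mpr hdet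
      have : Nontrivial (LinearMap.ker (Matrix.mulVecLin A)) :=
        nontrivial_of_ne ⟨v, by simpa [Matrix.mulVecLin_apply] using hv⟩ 0
          (by simp [Subtype.ext_iff, hv0])
      exact Module.finrank_pos_iff.mpr this
    have hhigh : Module.finrank ℝ (LinearMap.ker (Matrix.mulVecLin A))
        < Module.finrank ℝ (Fin 2 → ℝ) := Submodule.finrank_lt hlt.ne
    have h2 : Module.finrank ℝ (Fin 2 → ℝ) = 2 := by
      simp [Module.finrank_pi]
    rw [h2] at hhigh
    show Module.finrank ℝ (LinearMap.ker (Matrix.mulVecLin A)) = 1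
    omega
  · -- cone containment
    intro l hl
    have := quadzero l hl
    simp only [Matrix.mulVec, dotProduct, Fin.sum_univ_two, Matrix.cons_val', Matrix.cons_val_zero,
      Matrix.cons_val_one, Matrix.head_cons, Matrix.head_fin_const, Matrix.empty_val',
      Matrix.cons_val_fin_one, Matrix.of_apply]
    ring_nf
    ring_nf at this
    linarith
  · -- fold degeneracy
    intro l hl _
    constructor
    · have : l 0 • F xs + l 1 • G xs = 0 := by
        funext i
        have := (hker l hl i).2
        simp [Pi.add_apply, Pi.smul_apply, smul_eq_mul]
        linarith
      simp [this]
    · have h1 : ((1 : Matrix (Fin 2) (Fin 2) ℝ) + (2 * π) • (l 0 • MF + l 1 • MG)) - 1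
          = (2 * π) • (l 0 • MF + l 1 • MG) := add_sub_cancel_left _ _
      have hq := quadzero l hl
      rw [hC, Matrix.det_fin_two MF, Matrix.det_fin_two MG] at hq
      have hM : (l 0 • MF + l 1 • MG).det = 0 := by
        rw [Matrix.det_fin_two]
        simp only [Matrix.add_apply, Matrix.smul_apply, smul_eq_mul]
        linear_combination hq
      rw [h1, Matrix.det_smul, hM, mul_zero]
end
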